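/- Assume T is disk-like, T + ℤ² = ℝ², and distinct translates T + m (m ∈ ℤ²) have pairwise disjoint interiors. Let ℓ, ℓ' ∈ ℤ² \ {0} with T ∩ (T + ℓ) ≠ ∅ and T ∩ (T + ℓ') ≠ ∅, and suppose ℓ' = Aℓ − b_1 v for some b_1 ∈ ΔD. Then for every j ∈ I_{b_1}, one has (T + ℓ')° + jv ⊆ A·((T + ℓ)°), where S° denotes the interior of S, I_{b_1} = {b_1, …, |q|−1} if b_1 ≥ 0 and I_{b_1} = {0, …, |q|−1+b_1} if b_1 < 0. -/

import Mathlib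

noncomputable section

open Matrix Topology Set Pointwise Polynomial

/-- The plane `ℝ²` with the Euclidean metric. -/
abbrev E2 : Type := EuclideanSpace ℝ (Fin 2)

/-- View a plain vector `Fin 2 → ℝ` as a point of the Euclidean plane. -/
def toE (x : Fin 2 → ℝ) : E2 := WithLp.toLp 2 x

/-- The real matrix obtained from an integer matrix. -/
def matR (A : Matrix (Fin 2) (Fin 2) ℤ) : Matrix (Fin 2) (Fin 2) ℝ := A.map Int.cast

/-- View an integer vector as a point of the Euclidean plane. -/
def vecE (w : Fin 2 → ℤ) : E2 := toE fun i => (w i : ℝ)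

/-- All complex eigenvalues of `A` have modulus greater than 1. -/
def Expanding (A : Matrix (Fin 2) (Fin 2) ℤ) : Prop :=
  ∀ z : ℂ, ((A.charpoly).map (Int.castRingHom ℂ)).IsRoot z → 1 < ‖z‖

/-- `a` is a digit in `D = {0, 1, …, |q|-1}`. -/
def IsDigit (q a : ℤ) : Prop := 0 ≤ a ∧ a < |q|

/-- `b` belongs to the difference digit set `ΔD = D - D = {-(|q|-1), …, |q|-1}`. -/
def IsDiffDigit (q b : ℤ) : Prop := |b| ≤ |q| - 1

/-- `x = ∑_{i≥1} A^{-i} (c_{i-1} v)` (note the `0`-based indexing of `c`). -/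
def SumsTo (A : Matrix (Fin 2) (Fin 2) ℤ) (v : Fin 2 → ℤ) (c : ℕ → ℤ) (x : E2) : Prop :=
  HasSum (fun i : ℕ => toE (((matR A)⁻¹ ^ (i + 1)).mulVec ((c i : ℝ) • fun j => (v j : ℝ)))) x

/-- The self-affine tile `T = T(A, Dv)` with the consecutive collinear digit set `Dv`. -/
def Tile (A : Matrix (Fin 2) (Fin 2) ℤ) (q : ℤ) (v : Fin 2 → ℤ) : Set E2 :=
  {x | ∃ a : ℕ → ℤ, (∀ i, IsDigit q (a i)) ∧ SumsTo A v a x}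

/-- `T` is homeomorphic to the closed unit disk in `ℝ²`. -/
def DiskLike (T : Set E2) : Prop :=
  Nonempty (T ≃ₜ (Metric.closedBall (0 : E2) 1 : Set E2))

/-- `{v, Av}` is a `ℤ`-basis of `ℤ²` (primitivity of the digit set). -/
def IsZBasis (A : Matrix (Fin 2) (Fin 2) ℤ) (v : Fin 2 → ℤ) : Prop :=
  Submodule.span ℤ ({v, A.mulVec v} : Set (Fin 2 → ℤ)) = ⊤ ∧
    LinearIndependent ℤ ![v, A.mulVec v]

/-- `j ∈ I_b`, where `I_b = {b, …, |q|-1}` if `b ≥ 0` and `I_b = {0, …, |q|-1+b}` if `b < 0`. -/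
def MemI (q b j : ℤ) : Prop :=
  (0 ≤ b ∧ b ≤ j ∧ j ≤ |q| - 1) ∨ (b < 0 ∧ 0 ≤ j ∧ j ≤ |q| - 1 + b)

/-! Self-affinity `A T = T + D v` gives `T + a v ⊆ A T` for every digit `a`. For `j ∈ I_{b₁}`
the number `a = j - b₁` is a digit, and `ℓ' = A ℓ - b₁ v` turns this into
`T + ℓ' + j v ⊆ A (T + ℓ)`; since `A` is invertible it is a homeomorphism of the plane, so the
inclusion passes to interiors. -/

lemma Matrix.det_eq_of_charpoly_eq {R : Type*} [CommRing R] {A : Matrix (Fin 2) (Fin 2) R}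
    {p q : R} (hchar : A.charpoly = X ^ 2 + C p * X + C q) : A.det = q := by
  simp [Matrix.det_eq_sign_charpoly_coeff, hchar, coeff_X_pow, coeff_C]

lemma isUnit_det_matR {A : Matrix (Fin 2) (Fin 2) ℤ} (hA : A.det ≠ 0) :
    IsUnit (matR A).det := by
  rw [matR, ← Int.cast_det]
  exact isUnit_iff_ne_zero.mpr (Int.cast_ne_zero.mpr hA)

def toEuclideanCLE {𝕜 n : Type*} [RCLike 𝕜] [Fintype n] [DecidableEq n] (M : Matrix n n 𝕜)
    (hM : IsUnit M.det) : EuclideanSpace 𝕜 n ≃L[𝕜] EuclideanSpace 𝕜 n :=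
  ContinuousLinearEquiv.unitsEquiv 𝕜 _
    ((M.isUnit_iff_isUnit_det.mpr hM).map (Matrix.toEuclideanCLM (n := n) (𝕜 := 𝕜))).unit

lemma toEuclideanCLE_apply {𝕜 n : Type*} [RCLike 𝕜] [Fintype n] [DecidableEq n]
    (M : Matrix n n 𝕜) (hM : IsUnit M.det) (x : EuclideanSpace 𝕜 n) :
    toEuclideanCLE M hM x = WithLp.toLp 2 (M *ᵥ x) := rfl

lemma vecE_mulVec_sub_smul (A : Matrix (Fin 2) (Fin 2) ℤ) (w v : Fin 2 → ℤ) (b : ℤ) :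
    vecE (A *ᵥ w - b • v) = toE (matR A *ᵥ vecE w) - (b : ℝ) • vecE v := by
  ext i
  simp [vecE, toE, matR, Matrix.mulVec, dotProduct, -Matrix.mulVec_fin_two]

lemma isDigit_sub_of_memI {q b j : ℤ} (hj : MemI q b j) : IsDigit q (j - b) := by
  unfold MemI IsDigit at *
  omega

lemma SumsTo.cons {A : Matrix (Fin 2) (Fin 2) ℤ} {v : Fin 2 → ℤ} {c : ℕ → ℤ} {x : E2}
    (h : SumsTo A v c x) (a : ℤ) :
    SumsTo A v (fun n => Nat.casesOn n a c) (toE ((matR A)⁻¹ *ᵥ (x + (a : ℝ) • vecE v))) := by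
  have htail : HasSum
      (fun n => toE ((matR A)⁻¹ ^ (n + 1 + 1) *ᵥ ((c n : ℝ) • fun j => (v j : ℝ))))
      (toE ((matR A)⁻¹ *ᵥ x)) := by
    convert (Matrix.toEuclideanCLM (n := Fin 2) (𝕜 := ℝ) (matR A)⁻¹).hasSum h using 1
    · funext n
      rw [toE, Matrix.toEuclideanCLM_toLp, pow_succ', ← Matrix.mulVec_mulVec]
      rfl
    · rfl
  convert HasSum.zero_add (f := fun n => toE ((matR A)⁻¹ ^ (n + 1) *ᵥ
    ((Nat.casesOn n a c : ℤ) : ℝ) • fun j => (v j : ℝ))) htail using 1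
  rw [add_comm, zero_add, pow_one, toE, toE, ← WithLp.toLp_add, Matrix.mulVec_add]
  rfl

lemma inv_mulVec_add_digit_mem_tile {A : Matrix (Fin 2) (Fin 2) ℤ} {q a : ℤ} {v : Fin 2 → ℤ}
    {x : E2} (hx : x ∈ Tile A q v) (ha : IsDigit q a) :
    toE ((matR A)⁻¹ *ᵥ (x + (a : ℝ) • vecE v)) ∈ Tile A q v := by
  obtain ⟨c, hc, hsum⟩ := hx
  exact ⟨_, fun n => n.casesOn ha hc, hsum.cons a⟩

lemma digit_vadd_tile_subset {A : Matrix (Fin 2) (Fin 2) ℤ} {q a : ℤ} {v : Fin 2 → ℤ}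
    (hA : IsUnit (matR A).det) (ha : IsDigit q a) :
    (a : ℝ) • vecE v +ᵥ Tile A q v ⊆ toEuclideanCLE (matR A) hA '' Tile A q v := by
  rintro _ ⟨x, hx, rfl⟩
  refine ⟨_, inv_mulVec_add_digit_mem_tile hx ha, ?_⟩
  rw [toEuclideanCLE_apply, toE, Matrix.mulVec_mulVec, Matrix.mul_nonsing_inv _ hA,
    Matrix.one_mulVec]
  exact add_comm x _

theorem osc_inclusion_general
    (A : Matrix (Fin 2) (Fin 2) ℤ) (p q : ℤ) (v : Fin 2 → ℤ)
    (hq : 2 ≤ |q|)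
    (hchar : A.charpoly = X ^ 2 + C p * X + C q)
    (ℓ ℓ' : Fin 2 → ℤ)
    (b₁ : ℤ)
    (hrel : ℓ' = A.mulVec ℓ - b₁ • v) :
    ∀ j : ℤ, MemI q b₁ j →
      ((j : ℝ) • vecE v) +ᵥ interior (vecE ℓ' +ᵥ Tile A q v) ⊆
        (fun x : E2 => toE ((matR A).mulVec x)) '' interior (vecE ℓ +ᵥ Tile A q v) := by
  intro j hj
  have hA : IsUnit (matR A).det :=
    isUnit_det_matR (by rw [Matrix.det_eq_of_charpoly_eq hchar]; rintro rfl; simp at hq)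
  set e := toEuclideanCLE (matR A) hA with he
  change _ ⊆ e '' _
  rw [← interior_vadd, show e '' interior _ = interior (e '' _) from
    e.toHomeomorph.image_interior _]
  refine interior_mono ?_
  calc (j : ℝ) • vecE v +ᵥ (vecE ℓ' +ᵥ Tile A q v)
      = e (vecE ℓ) +ᵥ (((j - b₁ : ℤ) : ℝ) • vecE v +ᵥ Tile A q v) := by
        rw [hrel, vecE_mulVec_sub_smul, vadd_vadd, vadd_vadd, he, toEuclideanCLE_apply, toE]
        congr 1
        push_cast
        module
    _ ⊆ e (vecE ℓ) +ᵥ e '' Tile A q v :=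
        Set.vadd_set_mono (digit_vadd_tile_subset hA (isDigit_sub_of_memI hj))
    _ = e '' (vecE ℓ +ᵥ Tile A q v) := (image_vadd_distrib e _ _).symm

/-- open set condition inclusions. If `ℓ, ℓ'` are neighbor translates
with `ℓ' = Aℓ - b₁v`, `b₁ ∈ ΔD`, then `(T + ℓ')° + jv ⊆ A((T + ℓ)°)` for all `j ∈ I_{b₁}`. -/
theorem osc_inclusion
    (A : Matrix (Fin 2) (Fin 2) ℤ) (p q : ℤ) (v : Fin 2 → ℤ)
    (hq : 2 ≤ |q|)
    (hchar : A.charpoly = X ^ 2 + C p * X + C q)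
    (hexp : Expanding A)
    (hbasis : IsZBasis A v)
    (hdisk : DiskLike (Tile A q v))
    (hcover : (⋃ m : Fin 2 → ℤ, vecE m +ᵥ Tile A q v) = Set.univ)
    (hdisj : ∀ m m' : Fin 2 → ℤ, m ≠ m' →
      interior (vecE m +ᵥ Tile A q v) ∩ interior (vecE m' +ᵥ Tile A q v) = ∅)
    (ℓ ℓ' : Fin 2 → ℤ) (hℓ : ℓ ≠ 0) (hℓ' : ℓ' ≠ 0)
    (hnb : (Tile A q v ∩ (vecE ℓ +ᵥ Tile A q v)).Nonempty)
    (hnb' : (Tile A q v ∩ (vecE ℓ' +ᵥ Tile A q v)).Nonempty)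
    (b₁ : ℤ) (hb₁ : IsDiffDigit q b₁)
    (hrel : ℓ' = A.mulVec ℓ - b₁ • v) :
    ∀ j : ℤ, MemI q b₁ j →
      ((j : ℝ) • vecE v) +ᵥ interior (vecE ℓ' +ᵥ Tile A q v) ⊆
        (fun x : E2 => toE ((matR A).mulVec x)) '' interior (vecE ℓ +ᵥ Tile A q v) :=
  osc_inclusion_general A p q v hq hchar ℓ ℓ' b₁ hrel
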